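/- arXiv:1108.0333 — 3 statements merged into one kernel-verified Lean document; each statement's English description precedes it below -/
import Mathlib

section
/- Let μ = (l₁, c₁, r₁) and ν = (l₂, c₂, r₂) be triangular fuzzy numbers. Then d_E(μ, ν) = sup_{α ∈ (0,1]} of the Hausdorff distance between the α-level sets of μ and ν equals max(|l₁ − l₂|, |c₁ − c₂|, |r₁ − r₂|). -/
/-! The α-level sets of a triangular fuzzy number `(l, c, r)` are the intervals whose endpoints
move affinely in α, from `l` and `r` at `α = 0` to `c` at `α = 1`. The Hausdorff distance of two
compact intervals is the larger of the distances between corresponding endpoints, so the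
Hausdorff distance of the α-level sets is `max |(1-α)Δl + αΔc| |(1-α)Δr + αΔc|`. By convexity
of `|·|` this is at most `max |Δl| |Δc| |Δr|` for every α, the value at `α = 1` is `|Δc|`, and,
by continuity, values close to `max |Δl| |Δr|` are attained as `α → 0⁺`. -/

noncomputable def tfnLevel (l c r α : ℝ) : Set ℝ :=
  Set.Icc (c - (1 - α) * (c - l)) (c + (1 - α) * (r - c))

open Set Metric AffineMap

namespace Real

variable {a b c d : ℝ}

theorem exists_dist_le_of_mem_Icc {x : ℝ} (hcd : c ≤ d) (hx : x ∈ Icc a b) :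
    ∃ y ∈ Icc c d, dist x y ≤ max |a - c| |b - d| := by
  refine ⟨max c (min d x), ⟨le_max_left _ _, max_le hcd (min_le_left _ _)⟩, ?_⟩
  rw [Real.dist_eq, abs_le]
  grind [neg_abs_le, le_abs_self]

theorem hausdorffEDist_Icc_ne_top (hab : a ≤ b) (hcd : c ≤ d) :
    hausdorffEDist (Icc a b) (Icc c d) ≠ ⊤ :=
  hausdorffEDist_ne_top_of_nonempty_of_bounded (nonempty_Icc.2 hab) (nonempty_Icc.2 hcd)
    (Metric.isBounded_Icc a b) (Metric.isBounded_Icc c d)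

theorem sub_left_le_hausdorffDist_Icc (hab : a ≤ b) (hcd : c ≤ d) :
    c - a ≤ hausdorffDist (Icc a b) (Icc c d) := by
  refine le_trans ?_ (infDist_le_hausdorffDist_of_mem (left_mem_Icc.2 hab)
    (hausdorffEDist_Icc_ne_top hab hcd))
  refine (le_infDist (nonempty_Icc.2 hcd)).2 fun y hy => ?_
  rw [Real.dist_eq]
  linarith [hy.1, neg_abs_le (a - y)]

theorem sub_right_le_hausdorffDist_Icc (hab : a ≤ b) (hcd : c ≤ d) :
    b - d ≤ hausdorffDist (Icc a b) (Icc c d) := by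
  refine le_trans ?_ (infDist_le_hausdorffDist_of_mem (right_mem_Icc.2 hab)
    (hausdorffEDist_Icc_ne_top hab hcd))
  refine (le_infDist (nonempty_Icc.2 hcd)).2 fun y hy => ?_
  rw [Real.dist_eq]
  linarith [hy.2, le_abs_self (b - y)]

theorem hausdorffDist_Icc (hab : a ≤ b) (hcd : c ≤ d) :
    hausdorffDist (Icc a b) (Icc c d) = max |a - c| |b - d| := by
  apply le_antisymm
  · refine hausdorffDist_le_of_mem_dist ((abs_nonneg _).trans (le_max_left _ _))
      (fun x hx => exists_dist_le_of_mem_Icc hcd hx) fun x hx => ?_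
    simpa only [abs_sub_comm] using exists_dist_le_of_mem_Icc hab hx
  · refine max_le (abs_sub_le_iff.2 ⟨?_, ?_⟩) (abs_sub_le_iff.2 ⟨?_, ?_⟩)
    · rw [hausdorffDist_comm]; exact sub_left_le_hausdorffDist_Icc hcd hab
    · exact sub_left_le_hausdorffDist_Icc hab hcd
    · exact sub_right_le_hausdorffDist_Icc hab hcd
    · rw [hausdorffDist_comm]; exact sub_right_le_hausdorffDist_Icc hcd hab

end Real

theorem norm_lineMap_le_max {E : Type*} [SeminormedAddCommGroup E] [NormedSpace ℝ E]
    (u v : E) {t : ℝ} (ht : t ∈ Icc (0 : ℝ) 1) : ‖lineMap u v t‖ ≤ max ‖u‖ ‖v‖ :=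
  convexOn_univ_norm.le_max_of_mem_segment (mem_univ u) (mem_univ v) (lineMap_mem_segment ℝ u v ht)

theorem ContinuousWithinAt.le_ciSup_of_mem_closure {X α : Type*} [TopologicalSpace X]
    [ConditionallyCompleteLinearOrder α] [TopologicalSpace α] [OrderClosedTopology α]
    {f : X → α} {s : Set X} {x : X} (hf : ContinuousWithinAt f s x) (hx : x ∈ closure s)
    (hb : BddAbove (range fun y : s => f y)) : f x ≤ ⨆ y : s, f y :=
  hf.closure_le hx continuousWithinAt_const fun y hy => le_ciSup hb ⟨y, hy⟩

theorem tfnLevel_eq_Icc_lineMap (l c r α : ℝ) :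
    tfnLevel l c r α = Icc (lineMap l c α) (lineMap r c α) := by
  rw [tfnLevel, lineMap_apply_ring, lineMap_apply_ring]
  congr 1 <;> ring

theorem hausdorffDist_tfnLevel {l₁ c₁ r₁ l₂ c₂ r₂ α : ℝ} (h₁ : l₁ ≤ c₁ ∧ c₁ ≤ r₁)
    (h₂ : l₂ ≤ c₂ ∧ c₂ ≤ r₂) (hα : α ≤ 1) :
    hausdorffDist (tfnLevel l₁ c₁ r₁ α) (tfnLevel l₂ c₂ r₂ α) =
      max |lineMap (l₁ - l₂) (c₁ - c₂) α| |lineMap (r₁ - r₂) (c₁ - c₂) α| := by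
  rw [tfnLevel_eq_Icc_lineMap, tfnLevel_eq_Icc_lineMap,
    Real.hausdorffDist_Icc (lineMap_mono_left (h₁.1.trans h₁.2) hα)
      (lineMap_mono_left (h₂.1.trans h₂.2) hα)]
  simp only [← vsub_eq_sub, lineMap_vsub_lineMap]

/-- For two triangular fuzzy numbers `μ = (l₁, c₁, r₁)` and `ν = (l₂, c₂, r₂)`, the
distance `d_E(μ, ν)`, i.e. the supremum over `α ∈ (0,1]` of the Hausdorff distance
between the α-level sets, equals `max (|l₁ - l₂|, |c₁ - c₂|, |r₁ - r₂|)`. -/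
theorem tfn_dE_eq_max (l₁ c₁ r₁ l₂ c₂ r₂ : ℝ)
    (h₁ : l₁ ≤ c₁ ∧ c₁ ≤ r₁) (h₂ : l₂ ≤ c₂ ∧ c₂ ≤ r₂) :
    (⨆ α : Set.Ioc (0 : ℝ) 1,
      Metric.hausdorffDist (tfnLevel l₁ c₁ r₁ (α : ℝ)) (tfnLevel l₂ c₂ r₂ (α : ℝ))) =
      max |l₁ - l₂| (max |c₁ - c₂| |r₁ - r₂|) := by
  set F : ℝ → ℝ := fun α =>
    max |lineMap (l₁ - l₂) (c₁ - c₂) α| |lineMap (r₁ - r₂) (c₁ - c₂) α|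
  rw [iSup_congr fun α : Ioc (0 : ℝ) 1 => hausdorffDist_tfnLevel h₁ h₂ α.2.2]
  have hF_le : ∀ α ∈ Icc (0 : ℝ) 1, F α ≤ max |l₁ - l₂| (max |c₁ - c₂| |r₁ - r₂|) := by
    intro α hα
    have hl := norm_lineMap_le_max (l₁ - l₂) (c₁ - c₂) hα
    have hr := norm_lineMap_le_max (r₁ - r₂) (c₁ - c₂) hα
    simp only [Real.norm_eq_abs] at hl hr
    exact max_le (hl.trans (by gcongr; exact le_max_left _ _))
      (hr.trans (max_le (by simp) (by simp)))
  have hbdd : BddAbove (range fun α : Ioc (0 : ℝ) 1 => F α) :=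
    ⟨_, forall_mem_range.2 fun α => hF_le α (Ioc_subset_Icc_self α.2)⟩
  refine le_antisymm (ciSup_le fun α => hF_le α (Ioc_subset_Icc_self α.2)) ?_
  have hF_zero : F 0 ≤ ⨆ α : Ioc (0 : ℝ) 1, F α :=
    (by fun_prop : Continuous F).continuousWithinAt.le_ciSup_of_mem_closure
      (by simp [closure_Ioc zero_ne_one]) hbdd
  have hF_one : F 1 ≤ ⨆ α : Ioc (0 : ℝ) 1, F α := le_ciSup hbdd ⟨1, right_mem_Ioc.2 one_pos⟩
  simp only [F, lineMap_apply_zero, lineMap_apply_one, max_self, max_le_iff] at hF_zero hF_one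
  exact max_le hF_zero.1 (max_le hF_one hF_zero.2)
end

section
/- Let F⁺ and F⁻ be real n×n matrices such that F⁺ − F⁻ has all entries nonnegative. Let sequences x̲, x̄ : ℕ → ℝⁿ satisfy the coupled level-wise dynamics x̲(k+1) = F⁺·x̲(k) + F⁻·x̄(k) and x̄(k+1) = F⁻·x̲(k) + F⁺·x̄(k). If x̲(0) ≤ x̄(0) componentwise, then x̲(k) ≤ x̄(k) componentwise for all k ≥ 0 (the interval ordering of lower and upper level endpoints is preserved by the dynamics). -/
/-- If `F⁺ - F⁻` is entrywise nonnegative, the coupled level-wise dynamics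
`x̲(k+1) = F⁺ x̲(k) + F⁻ x̄(k)`, `x̄(k+1) = F⁻ x̲(k) + F⁺ x̄(k)` preserves the
componentwise ordering of lower and upper level endpoints: if `x̲(0) ≤ x̄(0)`
then `x̲(k) ≤ x̄(k)` for all `k`. -/
theorem levelwise_dynamics_preserves_interval_order (n : ℕ)
    (Fp Fm : Matrix (Fin n) (Fin n) ℝ)
    (hpos : ∀ i j, 0 ≤ (Fp - Fm) i j)
    (xl xu : ℕ → Fin n → ℝ)
    (hxl : ∀ k, xl (k + 1) = Fp.mulVec (xl k) + Fm.mulVec (xu k))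
    (hxu : ∀ k, xu (k + 1) = Fm.mulVec (xl k) + Fp.mulVec (xu k))
    (h0 : xl 0 ≤ xu 0) :
    ∀ k, xl k ≤ xu k := by
  intro k
  induction k with
  | zero => exact h0
  | succ k ih =>
    intro i
    have key : xu (k + 1) i - xl (k + 1) i
        = ((Fp - Fm).mulVec (fun j => xu k j - xl k j)) i := by
      rw [hxl, hxu]
      simp only [Matrix.mulVec, dotProduct, Pi.add_apply,
        Matrix.sub_apply, Finset.sum_sub_distrib, ← Finset.sum_add_distrib]
      ring_nf
      rw [← Finset.sum_sub_distrib]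
      congr 1; ext j; ring
    have hnn : 0 ≤ ((Fp - Fm).mulVec (fun j => xu k j - xl k j)) i := by
      rw [Matrix.mulVec, dotProduct]
      apply Finset.sum_nonneg
      intro j _
      exact mul_nonneg (hpos i j) (sub_nonneg.mpr (ih j))
    linarith [key ▸ hnn]
end

section
/- Let A be a real n×n matrix with nonnegative entries such that Σ_{j=1}^n a_ij ≤ 1 for every row i. Let Γ be a p×p matrix with nonnegative entries and let L be its Laplacian. Let K be an n×n diagonal matrix whose diagonal entries satisfy 0 ≤ k_ii and l_qq·k_ii ≤ a_ii for every i = 1,…,n and every q = 1,…,p (this is condition k_ii ≤ a_ii/l_m of the paper, made precise so that every Gershgorin center a_ii − l_qq·k_ii is nonnegative). Then every (complex) eigenvalue λ of the np×np matrix I_p ⊗ A − L ⊗ K satisfies |λ| ≤ 1, so the stacked synchronization dynamics z(k+1) = (I_p ⊗ A − L ⊗ K)·z(k) is stable and the array of p coupled identical systems z_i(k+1) = A z_i(k) + K Σ_j γ_ij (z_j(k) − z_i(k)) synchronizes. -/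
open Kronecker Finset

/-!
By Gershgorin's theorem every eigenvalue lies in a disc centred at a diagonal entry
`a_ii - l_qq k_ii` with radius the off-diagonal absolute row sum
`∑_{j ≠ i} a_ij + k_ii ∑_{q' ≠ q} |l_qq'|`. The centre is nonnegative by the bound on `K`, and the
Laplacian satisfies `∑_{q' ≠ q} |l_qq'| ≤ l_qq`, so the disc lies within distance
`∑_j a_ij ≤ 1` of the origin.
-/

theorem Matrix.norm_le_of_mem_spectrum_of_sum_norm_le {𝕜 ι : Type*} [NormedField 𝕜]
    [Fintype ι] [DecidableEq ι] {M : Matrix ι ι 𝕜} {c : ℝ} (hrow : ∀ i, ∑ j, ‖M i j‖ ≤ c) {μ : 𝕜}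
    (hμ : μ ∈ spectrum 𝕜 M) : ‖μ‖ ≤ c := by
  rw [← Matrix.spectrum_toLin', ← Module.End.hasEigenvalue_iff_mem_spectrum] at hμ
  obtain ⟨i, hi⟩ := eigenvalue_mem_ball hμ
  rw [Metric.mem_closedBall, dist_eq_norm] at hi
  calc ‖μ‖ ≤ ‖μ - M i i‖ + ‖M i i‖ := norm_le_norm_sub_add μ (M i i)
    _ ≤ ∑ j ∈ univ.erase i, ‖M i j‖ + ‖M i i‖ := by gcongr
    _ = ∑ j, ‖M i j‖ := sum_erase_add _ _ (mem_univ i)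
    _ ≤ c := hrow i

theorem sum_abs_offDiag_le_of_laplacian {p : Type*} [Fintype p] [DecidableEq p]
    {Γ L : Matrix p p ℝ} (hΓ : ∀ i j, 0 ≤ Γ i j)
    (hL : ∀ i j, L i j = if i = j then ∑ k, Γ i k else -Γ i j) (q : p) :
    ∑ q' ∈ univ.erase q, |L q q'| ≤ L q q := by
  calc ∑ q' ∈ univ.erase q, |L q q'| = ∑ q' ∈ univ.erase q, Γ q q' := by
        refine sum_congr rfl fun q' hq' => ?_
        rw [hL, if_neg (ne_of_mem_erase hq').symm, abs_neg, abs_of_nonneg (hΓ q q')]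
    _ ≤ ∑ k, Γ q k := sum_le_univ_sum_of_nonneg (hΓ q)
    _ = L q q := by rw [hL, if_pos rfl]

theorem sum_abs_one_kronecker_sub_kronecker_apply {m n : Type*} [Fintype m] [DecidableEq m]
    [Fintype n] [DecidableEq n] (A K : Matrix n n ℝ) (L : Matrix m m ℝ)
    (hK : ∀ i j, i ≠ j → K i j = 0) (q : m) (i : n) :
    ∑ x, |((1 : Matrix m m ℝ) ⊗ₖ A - L ⊗ₖ K) (q, i) x| =
      |A i i - L q q * K i i| + ∑ j ∈ univ.erase i, |A i j|
        + (∑ q' ∈ univ.erase q, |L q q'|) * |K i i| := by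
  have hdiag : ∀ q', ∑ j, |((1 : Matrix m m ℝ) ⊗ₖ A - L ⊗ₖ K) (q, i) (q', j)| =
      |(1 : Matrix m m ℝ) q q' * A i i - L q q' * K i i|
        + (1 : Matrix m m ℝ) q q' * ∑ j ∈ univ.erase i, |A i j| := by
    intro q'
    rw [← add_sum_erase univ _ (mem_univ i), mul_sum]
    congr 1
    refine sum_congr rfl fun j hj => ?_
    rw [Matrix.sub_apply, Matrix.kroneckerMap_apply, Matrix.kroneckerMap_apply,
      hK i j (ne_of_mem_erase hj).symm, mul_zero, sub_zero, abs_mul, Matrix.one_apply]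
    split_ifs <;> simp
  rw [Fintype.sum_prod_type, ← add_sum_erase univ _ (mem_univ q), sum_mul]
  simp only [hdiag, Matrix.one_apply_eq, one_mul]
  congr 1
  refine sum_congr rfl fun q' hq' => ?_
  rw [Matrix.one_apply_ne (ne_of_mem_erase hq').symm]
  simp [abs_mul]

theorem sum_abs_one_kronecker_sub_kronecker_apply_le {m n : Type*} [Fintype m] [DecidableEq m]
    [Fintype n] [DecidableEq n] {A K : Matrix n n ℝ} {L : Matrix m m ℝ}
    (hA : ∀ i j, 0 ≤ A i j) (hL : ∀ q, ∑ q' ∈ univ.erase q, |L q q'| ≤ L q q)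
    (hKdiag : ∀ i j, i ≠ j → K i j = 0) (hKnonneg : ∀ i, 0 ≤ K i i)
    (hKbound : ∀ i q, L q q * K i i ≤ A i i) (q : m) (i : n) :
    ∑ x, |((1 : Matrix m m ℝ) ⊗ₖ A - L ⊗ₖ K) (q, i) x| ≤ ∑ j, A i j := by
  have hcoupling := mul_le_mul_of_nonneg_right (hL q) (hKnonneg i)
  rw [sum_abs_one_kronecker_sub_kronecker_apply A K L hKdiag,
    abs_of_nonneg (sub_nonneg.2 (hKbound i q)), abs_of_nonneg (hKnonneg i),
    ← add_sum_erase univ _ (mem_univ i), sum_congr rfl fun j _ => abs_of_nonneg (hA i j)]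
  linarith

/-- Synchronization theorem: let `A` be entrywise nonnegative with row sums at most 1,
`Γ` a nonnegative weight matrix with Laplacian `L`, and `K` a diagonal matrix with
`0 ≤ k_ii` and `l_qq k_ii ≤ a_ii` for all `i, q`. Then every complex eigenvalue `λ`
of the stacked synchronization matrix `I_p ⊗ A - L ⊗ K` satisfies `|λ| ≤ 1`, so the
stacked dynamics `z(k+1) = (I_p ⊗ A - L ⊗ K) z(k)` is stable and the array of `p`
coupled identical systems synchronizes. -/
theorem stacked_synchronization_spectrum (n p : ℕ)
    (A : Matrix (Fin n) (Fin n) ℝ)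
    (hA : ∀ i j, 0 ≤ A i j)
    (hArow : ∀ i, ∑ j, A i j ≤ 1)
    (Γ L : Matrix (Fin p) (Fin p) ℝ)
    (hΓ : ∀ i j, 0 ≤ Γ i j)
    (hL : ∀ i j, L i j = if i = j then ∑ k, Γ i k else -Γ i j)
    (K : Matrix (Fin n) (Fin n) ℝ)
    (hKdiag : ∀ i j, i ≠ j → K i j = 0)
    (hKnonneg : ∀ i, 0 ≤ K i i)
    (hKbound : ∀ (i : Fin n) (q : Fin p), L q q * K i i ≤ A i i) :
    ∀ μ : ℂ, μ ∈ spectrum ℂ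
        ((((1 : Matrix (Fin p) (Fin p) ℝ) ⊗ₖ A) - (L ⊗ₖ K)).map (algebraMap ℝ ℂ)) →
      ‖μ‖ ≤ 1 := by
  intro μ hμ
  refine Matrix.norm_le_of_mem_spectrum_of_sum_norm_le (fun ⟨q, i⟩ => ?_) hμ
  simp only [Matrix.map_apply, norm_algebraMap', Real.norm_eq_abs]
  exact (sum_abs_one_kronecker_sub_kronecker_apply_le hA
    (sum_abs_offDiag_le_of_laplacian hΓ hL) hKdiag hKnonneg hKbound q i).trans (hArow i)
end
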